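/- Geometric-sum asymptotics for a mildly explosive root (step in the proof of Theorem 3). Let c > 0 and α ∈ (0,1), set δ_n := 1 + c·n^{−α}, and let (m_n) be a sequence of natural numbers with m_n/n^{α} → ∞ as n → ∞. Then ( Σ_{k=0}^{m_n} δ_n^{k} ) / ( n^{α} · δ_n^{m_n} ) → 1/c as n → ∞. In particular, with m_n = ⌊n·q⌋ for any fixed q > 0, the partial sums Σ_{k=0}^{⌊nq⌋} δ_n^{k} are asymptotically equivalent to (n^{α}/c)·δ_n^{⌊nq⌋}. -/
import Mathlib

open Filter

lemma geom_aux (c α : ℝ) (hc : 0 < c)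
    (hα : α ∈ Set.Ioo (0 : ℝ) 1)
    (m : ℕ → ℕ)
    (hm : Tendsto (fun n : ℕ => (m n : ℝ) / (n : ℝ) ^ α) atTop atTop) :
    Tendsto (fun n : ℕ =>
        (∑ k ∈ Finset.range (m n + 1), (1 + c * (n : ℝ) ^ (-α)) ^ k) /
          ((n : ℝ) ^ α * (1 + c * (n : ℝ) ^ (-α)) ^ (m n)))
      atTop (nhds (1 / c)) := by
  have hδ1 : Tendsto (fun n : ℕ => 1 + c * (n : ℝ) ^ (-α)) atTop (nhds 1) := by
    have h0 : Tendsto (fun n : ℕ => (n : ℝ) ^ (-α)) atTop (nhds 0) :=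
      (tendsto_rpow_neg_atTop hα.1).comp tendsto_natCast_atTop_atTop
    have := Tendsto.const_add (1:ℝ) (h0.const_mul c)
    simpa using this
  have hpow : Tendsto (fun n : ℕ => (1 + c * (n : ℝ) ^ (-α)) ^ (m n)) atTop atTop := by
    apply tendsto_atTop_mono' atTop
      (f₁ := fun n : ℕ => 1 + c * ((m n : ℝ) / (n : ℝ) ^ α))
    · filter_upwards [eventually_ge_atTop 1] with n hn
      have hn0 : (0:ℝ) < (n:ℝ) := by exact_mod_cast hn
      have hxx : (0:ℝ) ≤ c * (n : ℝ) ^ (-α) := by positivity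
      have hb := one_add_mul_le_pow (a := c * (n : ℝ) ^ (-α)) (by linarith) (m n)
      have hrw : (m n : ℝ) * (c * (n : ℝ) ^ (-α)) = c * ((m n : ℝ) / (n : ℝ) ^ α) := by
        rw [Real.rpow_neg (le_of_lt hn0)]
        field_simp
      rw [hrw] at hb
      exact hb
    · exact tendsto_atTop_add_const_left _ 1 (hm.const_mul_atTop hc)
  have hlim : Tendsto (fun n : ℕ =>
      ((1 + c * (n : ℝ) ^ (-α)) - ((1 + c * (n : ℝ) ^ (-α)) ^ (m n))⁻¹) / c)
      atTop (nhds (1 / c)) := by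
    have := (hδ1.sub hpow.inv_tendsto_atTop).div_const c
    simpa using this
  apply hlim.congr'
  filter_upwards [eventually_ge_atTop 1] with n hn
  have hn0 : (0:ℝ) < (n:ℝ) := by exact_mod_cast hn
  set x : ℝ := c * (n : ℝ) ^ (-α) with hxdef
  have hx : 0 < x := by positivity
  have hδne : (1 + x) ≠ 1 := by nlinarith
  have hδpos : (0:ℝ) < 1 + x := by linarith
  have hδmne : (1 + x) ^ (m n) ≠ 0 := pow_ne_zero _ (ne_of_gt hδpos)
  have hsum : (∑ k ∈ Finset.range (m n + 1), (1 + x) ^ k)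
      = ((1 + x) ^ (m n + 1) - 1) / x := by
    rw [geom_sum_eq hδne]
    simp
  have hna : (n : ℝ) ^ α ≠ 0 := by positivity
  have hc' : (n : ℝ) ^ α * x = c := by
    rw [hxdef, Real.rpow_neg (le_of_lt hn0)]
    field_simp
  rw [hsum]
  rw [div_div]
  rw [show x * ((n : ℝ) ^ α * (1 + x) ^ (m n)) = c * (1 + x) ^ (m n) by
    rw [← hc']; ring]
  rw [div_eq_div_iff (ne_of_gt hc) (by positivity)]
  field_simp
  ring

/-- Geometric-sum asymptotics for a mildly explosive root (step in the proof of
Theorem 3): with `δ_n = 1 + c n^{-α}`, `c > 0`, `α ∈ (0,1)`, and `m_n / n^α → ∞`,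
`(Σ_{k=0}^{m_n} δ_n^k) / (n^α δ_n^{m_n}) → 1/c`; in particular, for any fixed `q > 0`,
the partial sums `Σ_{k=0}^{⌊nq⌋} δ_n^k` are asymptotically equivalent to
`(n^α / c) δ_n^{⌊nq⌋}`. -/
theorem geometric_sum_asymptotics (c α : ℝ) (hc : 0 < c)
    (hα : α ∈ Set.Ioo (0 : ℝ) 1)
    (m : ℕ → ℕ)
    (hm : Tendsto (fun n : ℕ => (m n : ℝ) / (n : ℝ) ^ α) atTop atTop) :
    Tendsto (fun n : ℕ =>
        (∑ k ∈ Finset.range (m n + 1), (1 + c * (n : ℝ) ^ (-α)) ^ k) /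
          ((n : ℝ) ^ α * (1 + c * (n : ℝ) ^ (-α)) ^ (m n)))
      atTop (nhds (1 / c)) ∧
    ∀ q : ℝ, 0 < q →
      Tendsto (fun n : ℕ =>
          (∑ k ∈ Finset.range (⌊(n : ℝ) * q⌋₊ + 1), (1 + c * (n : ℝ) ^ (-α)) ^ k) /
            ((n : ℝ) ^ α * (1 + c * (n : ℝ) ^ (-α)) ^ ⌊(n : ℝ) * q⌋₊))
        atTop (nhds (1 / c)) := by
  constructor
  · exact geom_aux c α hc hα m hm
  · intro q hq
    apply geom_aux c α hc hα (fun n => ⌊(n : ℝ) * q⌋₊)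
    apply tendsto_atTop_mono' atTop
      (f₁ := fun n : ℕ => ((n : ℝ) * q - 1) / (n : ℝ) ^ α)
    · filter_upwards [eventually_ge_atTop 1] with n hn
      have hn0 : (0:ℝ) < (n:ℝ) := by exact_mod_cast hn
      have hfl : (n : ℝ) * q - 1 ≤ (⌊(n : ℝ) * q⌋₊ : ℝ) := by
        have := Nat.sub_one_lt_floor ((n : ℝ) * q)
        linarith
      exact div_le_div_of_nonneg_right hfl (by positivity) |>.trans_eq rfl
    · have h1 : Tendsto (fun n : ℕ => (n : ℝ) * q / (n : ℝ) ^ α) atTop atTop := by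
        have : Tendsto (fun n : ℕ => q * (n : ℝ) ^ (1 - α)) atTop atTop :=
          ((tendsto_rpow_atTop (by linarith [hα.2])).comp
            tendsto_natCast_atTop_atTop).const_mul_atTop hq
        apply this.congr'
        filter_upwards [eventually_ge_atTop 1] with n hn
        have hn0 : (0:ℝ) < (n:ℝ) := by exact_mod_cast hn
        rw [Real.rpow_sub hn0, Real.rpow_one]
        field_simp
      have h2 : Tendsto (fun n : ℕ => -(1 / (n : ℝ) ^ α)) atTop (nhds 0) := by
        have : Tendsto (fun n : ℕ => (n : ℝ) ^ (-α)) atTop (nhds 0) :=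
          (tendsto_rpow_neg_atTop hα.1).comp tendsto_natCast_atTop_atTop
        have h3 : Tendsto (fun n : ℕ => ((n : ℝ) ^ α)⁻¹) atTop (nhds 0) := by
          apply this.congr'
          filter_upwards [eventually_ge_atTop 1] with n hn
          have hn0 : (0:ℝ) < (n:ℝ) := by exact_mod_cast hn
          rw [Real.rpow_neg (le_of_lt hn0)]
        simpa using h3.neg
      have := h1.atTop_add h2
      apply this.congr
      intro n
      ring
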